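/- arXiv:0706.4107 — 4 statements merged into one kernel-verified Lean document; each statement's English description precedes it below -/
import Mathlib

section
/- Let A : Fin n → ℕ be a monotone (sorted nondecreasing) sequence with all values less than u, and let h = ⌊log2(n/3)⌋ with n ≥ 3. Define hi(x) = x / 2^(log2 u − h) (the top h bits, where u ≤ 2^(log2 u)). Then the unary-difference encoding of hi(A(⌈2n/3⌉)), hi(A(⌈2n/3⌉+1)), …, hi(A(n−1)), consisting of hi(A(⌈2n/3⌉)) zeros, a one, and then for each subsequent index i the quantity hi(A(i)) − hi(A(i−1)) zeros followed by a one, has total length at most n/3 + n/3: exactly ⌈n/3⌉ ones (one per encoded element) and at most hi(A(n−1)) ≤ n/3 zeros in total. -/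
open Finset

section OrderedSub

variable {M : Type*} [AddCommMonoid M] [PartialOrder M] [Sub M] [OrderedSub M] [AddLeftMono M]
  [AddLeftReflectLE M] [ExistsAddOfLE M]

theorem Monotone.add_sum_Ico_tsub_eq {g : ℕ → M} (hg : Monotone g) {s m : ℕ} (hsm : s ≤ m) :
    g s + ∑ i ∈ Ico (s + 1) (m + 1), (g i - g (i - 1)) = g m := by
  have hshift : Monotone fun k => g (s + k) := fun a b hab => hg (by omega)
  have htelescope := sum_range_tsub hshift (m - s)
  simp only [← Nat.add_assoc, Nat.add_sub_cancel' hsm, add_zero] at htelescope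
  rw [sum_Ico_eq_sum_range, Nat.add_sub_add_right]
  simp only [Nat.add_right_comm s 1, Nat.add_sub_cancel]
  rw [htelescope, add_tsub_cancel_of_le (hg hsm)]

end OrderedSub

theorem Nat.div_pow_sub_lt_pow {b x L h : ℕ} (hx : x < b ^ L) (hhL : h ≤ L) :
    x / b ^ (L - h) < b ^ h :=
  Nat.div_lt_of_lt_mul (by rwa [← pow_add, Nat.sub_add_cancel hhL])

/-- The unary-difference encoding of the high parts of the last third of a
sorted array: the zero counts telescope to `hi (A (n-1))`, which is at most
`n/3`, and there is one `1` per encoded element. -/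
theorem stmt_1 (n u L : ℕ) (hn : 3 ≤ n) (hu : u ≤ 2 ^ L)
    (hL : Nat.log 2 (n / 3) ≤ L)
    (A : ℕ → ℕ) (hmono : Monotone A) (hlt : ∀ i < n, A i < u) :
    ∀ h hi s, h = Nat.log 2 (n / 3) → hi = (fun x : ℕ => x / 2 ^ (L - h)) →
      s = n - n / 3 →
      -- total number of zeros in the stream telescopes:
      hi (A s) + ∑ i ∈ Finset.Ico (s + 1) n, (hi (A i) - hi (A (i - 1)))
          = hi (A (n - 1)) ∧
      -- and is at most n/3:
      hi (A (n - 1)) ≤ n / 3 ∧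
      -- number of ones, one per encoded element:
      n - s = n / 3 := by
  rintro h hi s rfl rfl rfl
  have hhi_mono : Monotone fun i => A i / 2 ^ (L - Nat.log 2 (n / 3)) :=
    fun a b hab => Nat.div_le_div_right (hmono hab)
  refine ⟨?_, ?_, by omega⟩
  · have := hhi_mono.add_sum_Ico_tsub_eq (s := n - n / 3) (m := n - 1) (by omega)
    rwa [Nat.sub_add_cancel (by omega : 1 ≤ n)] at this
  · have hhi_lt : A (n - 1) / 2 ^ (L - Nat.log 2 (n / 3)) < 2 ^ Nat.log 2 (n / 3) :=
      Nat.div_pow_sub_lt_pow ((hlt (n - 1) (by omega)).trans_le hu) hL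
    exact (hhi_lt.trans_le (Nat.pow_log_le_self 2 (by omega))).le
end

section
/- A sorted list of n integers each in [0, u) can be encoded as an n-word array (words of ⌈log2 u⌉ bits) together with O(1) extra words such that the last Θ(n log n) bits of the array are zero; formally, for n ≥ 3 and u ≥ n, there is an injective map from the set of nondecreasing sequences of length n with values in [0,u) into sequences of n integers in [0,u) whose last ⌊n/3⌋·⌊log2(n/3)⌋ bits (i.e., the low-order bits of the trailing words) are zero, together with O(1) auxiliary words. -/
open Nat Finset
lemma fac_mul_pow_le (a m : ℕ) : a ! * a ^ m ≤ (a + m)! := by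
  induction m with
  | zero => simp
  | succ m ih =>
    rw [pow_succ, ← mul_assoc]
    calc a ! * a ^ m * a ≤ (a + m)! * a := Nat.mul_le_mul_right _ ih
      _ ≤ (a + m)! * (a + m + 1) := Nat.mul_le_mul_left _ (by omega)
      _ = (a + (m+1))! := by rw [show a + (m+1) = (a+m)+1 by ring, Nat.factorial_succ]; ring

lemma fac_mul_two_pow_le (a m : ℕ) (ha : 1 ≤ a) : a ! * 2 ^ m ≤ (a + m)! := by
  induction m with
  | zero => simp
  | succ m ih =>
    rw [pow_succ, ← mul_assoc]
    calc a ! * 2 ^ m * 2 ≤ (a + m)! * 2 := Nat.mul_le_mul_right _ ih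
      _ ≤ (a + m)! * (a + m + 1) := Nat.mul_le_mul_left _ (by omega)
      _ = (a + (m+1))! := by rw [show a + (m+1) = (a+m)+1 by ring, Nat.factorial_succ]; ring

lemma four_pow_le_fac (k : ℕ) (hk : 2 ≤ k) : 4 ^ k ≤ (2 * k)! := by
  induction k with
  | zero => omega
  | succ k ih =>
    rcases Nat.lt_or_ge k 2 with h | h
    · interval_cases k
      · omega
      · norm_num [Nat.factorial]
    · have := ih h
      rw [pow_succ]
      calc 4 ^ k * 4 ≤ (2 * k)! * 4 := Nat.mul_le_mul_right _ this
        _ ≤ (2 * k)! * ((2 * k + 1) * (2 * k + 2)) := Nat.mul_le_mul_left _ (by nlinarith)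
        _ = (2 * (k + 1))! := by
            have : 2 * (k + 1) = (2 * k + 1) + 1 := by ring
            rw [this, Nat.factorial_succ, Nat.factorial_succ]; ring

lemma key_fac (n : ℕ) (h6 : 6 ≤ n) : 2 ^ n * (n / 3) ^ (n / 3) ≤ n ! := by
  set k := n / 3 with hk
  have hk2 : 2 ≤ k := by omega
  have h3k : 3 * k ≤ n := by omega
  have h1 : (3 * k)! * 2 ^ (n - 3 * k) ≤ n ! := by
    have := fac_mul_two_pow_le (3 * k) (n - 3 * k) (by omega)
    rwa [show 3 * k + (n - 3 * k) = n by omega] at this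
  have h2 : (2 * k)! * (2 * k) ^ k ≤ (3 * k)! := by
    have := fac_mul_pow_le (2 * k) k
    rwa [show 2 * k + k = 3 * k by ring] at this
  have h3 : 4 ^ k ≤ (2 * k)! := four_pow_le_fac k hk2
  calc 2 ^ n * k ^ k = 4 ^ k * (2 * k) ^ k * 2 ^ (n - 3 * k) := by
        rw [mul_pow]
        have : (4:ℕ) ^ k = 2 ^ k * 2 ^ k := by rw [← pow_add]; rw [show (4:ℕ) = 2^2 by norm_num, ← pow_mul]; ring_nf
        rw [this, show (2:ℕ) ^ n = 2 ^ k * 2 ^ k * 2 ^ k * 2 ^ (n - 3 * k) by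
          rw [← pow_add, ← pow_add, ← pow_add]; congr 1; omega]
        ring
    _ ≤ (2 * k)! * (2 * k) ^ k * 2 ^ (n - 3 * k) := by
        exact Nat.mul_le_mul_right _ (Nat.mul_le_mul_right _ h3)
    _ ≤ (3 * k)! * 2 ^ (n - 3 * k) := Nat.mul_le_mul_right _ h2
    _ ≤ n ! := h1

lemma geom_sum_nat (x m : ℕ) (hx : 1 ≤ x) :
    (∑ i ∈ Finset.range m, (x - 1) * x ^ i) + 1 = x ^ m := by
  induction m with
  | zero => simp
  | succ m ih =>
    rw [Finset.sum_range_succ, pow_succ]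
    have h1 : 1 ≤ x ^ m := Nat.one_le_pow _ _ hx
    have h2 : x ^ m ≤ x * x ^ m := Nat.le_mul_of_pos_left _ hx
    have h3 : (x - 1) * x ^ m = x * x ^ m - x ^ m := by
      rw [Nat.sub_mul, one_mul]
    have h4 : x ^ m * x = x * x ^ m := mul_comm _ _
    omega

lemma digits_inj (u : ℕ) (hu : 0 < u) :
    ∀ n a b, a < u ^ n → b < u ^ n →
      (∀ i, i < n → a / u ^ i % u = b / u ^ i % u) → a = b := by
  intro n
  induction n with
  | zero => intro a b ha hb _; simp at ha hb; omega
  | succ n ih =>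
    intro a b ha hb h
    have h0 := h 0 (by omega)
    simp at h0
    have ha' : a / u < u ^ n := by
      rw [Nat.div_lt_iff_lt_mul hu]; rw [pow_succ] at ha; exact ha
    have hb' : b / u < u ^ n := by
      rw [Nat.div_lt_iff_lt_mul hu]; rw [pow_succ] at hb; exact hb
    have heq : a / u = b / u := by
      apply ih _ _ ha' hb'
      intro i hi
      have := h (i + 1) (by omega)
      rw [Nat.div_div_eq_div_mul, Nat.div_div_eq_div_mul]
      rwa [pow_succ'] at this
    rw [← Nat.div_add_mod a u, ← Nat.div_add_mod b u, heq, h0]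

def embAux (n u : ℕ) (f : Fin n → Fin u) : Fin n → Fin (u + n) :=
  fun i => ⟨(f i : ℕ) + (i : ℕ), by have := (f i).isLt; have := i.isLt; omega⟩

lemma embAux_strictMono {n u : ℕ} {f : Fin n → Fin u} (hf : Monotone f) :
    StrictMono (embAux n u f) := by
  intro i j hij
  have h1 : (f i : ℕ) ≤ (f j : ℕ) := hf (le_of_lt hij)
  have h2 : (i : ℕ) < (j : ℕ) := hij
  simp only [embAux, Fin.mk_lt_mk]
  omega

lemma embAux_card {n u : ℕ} {f : Fin n → Fin u} (hf : Monotone f) :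
    (Finset.image (embAux n u f) Finset.univ).card = n := by
  rw [Finset.card_image_of_injective _ (embAux_strictMono hf).injective,
    Finset.card_univ, Fintype.card_fin]

/-- monotone functions are at most `(u+n).choose n` -/
lemma card_mono_le (n u : ℕ) [Fintype {f : Fin n → Fin u // Monotone f}] :
    Fintype.card {f : Fin n → Fin u // Monotone f} ≤ (u + n).choose n := by
  let emb : {f : Fin n → Fin u // Monotone f} → {s : Finset (Fin (u + n)) // s.card = n} :=
    fun p => ⟨Finset.image (embAux n u p.1) Finset.univ, embAux_card p.2⟩
  have hinj : Function.Injective emb := by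
    intro ⟨f, hf⟩ ⟨g, hg⟩ he
    simp only [emb, Subtype.mk.injEq] at he
    have e1 := Finset.orderEmbOfFin_unique (embAux_card hf)
      (fun x => Finset.mem_image_of_mem _ (Finset.mem_univ x)) (embAux_strictMono hf)
    have e2 := Finset.orderEmbOfFin_unique (embAux_card hf)
      (f := embAux n u g)
      (fun x => by rw [he]; exact Finset.mem_image_of_mem _ (Finset.mem_univ x))
      (embAux_strictMono hg)
    have e3 : embAux n u f = embAux n u g := e1.trans e2.symm
    apply Subtype.ext
    show f = g
    funext i
    have := congrFun e3 i
    simp only [embAux, Fin.mk.injEq] at this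
    exact Fin.ext (by omega)
  calc Fintype.card {f : Fin n → Fin u // Monotone f}
      ≤ Fintype.card {s : Finset (Fin (u + n)) // s.card = n} :=
        Fintype.card_le_of_injective emb hinj
    _ = (u + n).choose n := by
        rw [Fintype.card_finset_len, Fintype.card_fin]

lemma main_count (n u : ℕ) (hn : 3 ≤ n) (hu : n ≤ u) :
    ∃ j, j ≤ n ∧ (n / 3) * Nat.log 2 (n / 3) ≤ Nat.clog 2 u * j ∧
      (u + n).choose n ≤ u ^ (n - j) * u ^ 2 := by
  set k := n / 3 with hkdef
  set L := Nat.log 2 k with hLdef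
  set w := Nat.clog 2 u with hwdef
  have hu2 : 2 ≤ u := by omega
  have hw1 : 1 ≤ w := Nat.clog_pos one_lt_two (by omega)
  have hupow : u ≤ 2 ^ w := Nat.le_pow_clog one_lt_two u
  have hpow2 : 2 ^ (w - 1) < u := Nat.pow_pred_clog_lt_self one_lt_two (by omega)
  set j := if k * L = 0 then 0 else k * L / w + 1 with hjdef
  have hB : k * L ≤ w * j := by
    by_cases h : k * L = 0
    · simp [hjdef, h]
    · simp only [hjdef, if_neg h]
      rw [Nat.mul_add, Nat.mul_one]
      have h1 := Nat.div_add_mod (k * L) w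
      have h2 : k * L % w < w := Nat.mod_lt _ (by omega)
      omega
  have hLw : L ≤ w :=
    le_trans (Nat.log_mono_right (by omega : k ≤ u)) (Nat.log_le_clog 2 u)
  have hC : j ≤ n := by
    by_cases h : k * L = 0
    · simp only [hjdef, if_pos h]; omega
    · simp only [hjdef, if_neg h]
      have h1 : k * L ≤ k * w := Nat.mul_le_mul_left _ hLw
      have h2 : k * L / w ≤ k * w / w := Nat.div_le_div_right h1
      rw [Nat.mul_div_cancel _ (by omega : 0 < w)] at h2
      omega
  have hwj : w * j ≤ k * L + w := by
    by_cases h : k * L = 0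
    · simp [hjdef, h]
    · simp only [hjdef, if_neg h]
      have : w * (k * L / w) ≤ k * L := Nat.mul_div_le _ _
      rw [Nat.mul_add, Nat.mul_one]
      omega
  have hA : 2 ^ n * u ^ j ≤ n ! * u ^ 2 := by
    rcases Nat.lt_or_ge n 6 with h6 | h6
    · -- n ∈ {3,4,5}, k = 1, L = 0, j = 0
      have hk1 : k = 1 := by omega
      have hL0 : L = 0 := by rw [hLdef, hk1]; simp
      have hj0 : j = 0 := by simp [hjdef, hk1, hL0]
      rw [hj0, pow_zero, mul_one]
      have hu9 : 9 ≤ u ^ 2 := by nlinarith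
      interval_cases n <;> simp [Nat.factorial] <;> nlinarith
    · -- n ≥ 6
      have hk2 : 2 ≤ k := by omega
      have hL1 : 1 ≤ L := Nat.log_pos one_lt_two hk2
      have hkey := key_fac n h6
      have h2L : 2 ^ L ≤ k := Nat.pow_log_le_self 2 (by omega)
      have hkL : 2 ^ (k * L) ≤ k ^ k := by
        rw [mul_comm, pow_mul]
        exact Nat.pow_le_pow_left h2L k
      have huj : u ^ j ≤ 2 ^ (w * j) := by
        rw [pow_mul]
        exact Nat.pow_le_pow_left hupow j
      have h2w : 2 ^ w ≤ u ^ 2 := by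
        have he : 2 ^ w = 2 ^ (w - 1) * 2 := by
          rw [← _root_.pow_succ]
          congr 1
          omega
        have h2u : 2 ^ w ≤ 2 * u := by omega
        nlinarith
      have huj2 : u ^ j ≤ k ^ k * u ^ 2 := by
        calc u ^ j ≤ 2 ^ (w * j) := huj
          _ ≤ 2 ^ (k * L + w) := Nat.pow_le_pow_right (by omega) hwj
          _ = 2 ^ (k * L) * 2 ^ w := by rw [pow_add]
          _ ≤ k ^ k * u ^ 2 := Nat.mul_le_mul hkL h2w
      calc 2 ^ n * u ^ j ≤ 2 ^ n * (k ^ k * u ^ 2) := Nat.mul_le_mul_left _ huj2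
        _ = (2 ^ n * k ^ k) * u ^ 2 := by ring
        _ ≤ n ! * u ^ 2 := Nat.mul_le_mul_right _ hkey
  refine ⟨j, hC, ?_, ?_⟩
  · calc k * L ≤ w * j := hB
      _ = w * j := rfl
  · -- choose bound
    have hdesc : n ! * ((u + n).choose n) = (u + n).descFactorial n :=
      (Nat.descFactorial_eq_factorial_mul_choose _ _).symm
    have h1 : n ! * ((u + n).choose n) ≤ 2 ^ n * u ^ n := by
      rw [hdesc]
      calc (u + n).descFactorial n ≤ (u + n) ^ n := Nat.descFactorial_le_pow _ _
        _ ≤ (2 * u) ^ n := Nat.pow_le_pow_left (by omega) n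
        _ = 2 ^ n * u ^ n := by rw [mul_pow]
    have hpos : 0 < 2 ^ n * u ^ j := by positivity
    apply Nat.le_of_mul_le_mul_right _ hpos
    calc (u + n).choose n * (2 ^ n * u ^ j)
        ≤ (u + n).choose n * (n ! * u ^ 2) := Nat.mul_le_mul_left _ hA
      _ = (n ! * ((u + n).choose n)) * u ^ 2 := by ring
      _ ≤ (2 ^ n * u ^ n) * u ^ 2 := Nat.mul_le_mul_right _ h1
      _ = u ^ (n - j) * u ^ 2 * (2 ^ n * u ^ j) := by
          rw [show u ^ n = u ^ (n - j) * u ^ j by rw [← pow_add]; congr 1; omega]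
          ring


/-- A sorted list of `n` integers in `[0,u)` can be injectively encoded as an
`n`-word array (words of `⌈log₂ u⌉` bits) whose last
`⌊n/3⌋·⌊log₂(n/3)⌋` bits are zero, together with `O(1)` auxiliary words. -/
theorem stmt_2 :
    ∃ c : ℕ, ∀ n u : ℕ, 3 ≤ n → n ≤ u →
      ∃ F : {f : Fin n → Fin u // Monotone f} → (Fin n → Fin u) × (Fin c → Fin u),
        Function.Injective F ∧
        ∀ f, (∑ i : Fin n, ((F f).1 i : ℕ) * 2 ^ (Nat.clog 2 u * (i : ℕ)))
            < 2 ^ (n * Nat.clog 2 u - (n / 3) * Nat.log 2 (n / 3)) := by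
  refine ⟨2, fun n u hn hu => ?_⟩
  have hu0 : 0 < u := by omega
  have hu2 : 2 ≤ u := by omega
  letI : Fintype {f : Fin n → Fin u // Monotone f} := Fintype.ofFinite _
  obtain ⟨j, hjn, hkl, hchoose⟩ := main_count n u hn hu
  set w := Nat.clog 2 u with hwdef
  set m := n - j with hmdef
  set M := Fintype.card {f : Fin n → Fin u // Monotone f} with hMdef
  have hM : M ≤ u ^ m * u ^ 2 := (card_mono_le n u).trans hchoose
  have hupow : u ≤ 2 ^ w := Nat.le_pow_clog one_lt_two u
  let eqv := Fintype.equivFin {f : Fin n → Fin u // Monotone f}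
  have hNlt : ∀ f : {f : Fin n → Fin u // Monotone f},
      ((eqv f : ℕ) % u ^ m) < u ^ m := fun f => Nat.mod_lt _ (by positivity)
  have hblt : ∀ f : {f : Fin n → Fin u // Monotone f},
      ((eqv f : ℕ) / u ^ m) < u ^ 2 := by
    intro f
    rw [Nat.div_lt_iff_lt_mul (by positivity)]
    calc (eqv f : ℕ) < M := (eqv f).isLt
      _ ≤ u ^ m * u ^ 2 := hM
      _ = u ^ 2 * u ^ m := by ring
  refine ⟨fun f =>
    (fun i => ⟨((eqv f : ℕ) % u ^ m) / u ^ (i : ℕ) % u, Nat.mod_lt _ hu0⟩,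
     fun t => ⟨(eqv f : ℕ) / u ^ m / u ^ (t : ℕ) % u, Nat.mod_lt _ hu0⟩), ?_, ?_⟩
  · -- injectivity
    intro f1 f2 he
    set N1 := (eqv f1 : ℕ) with hN1
    set N2 := (eqv f2 : ℕ) with hN2
    have h1 := congrArg Prod.fst he
    have h2 := congrArg Prod.snd he
    simp only at h1 h2
    -- recover b
    have hb : N1 / u ^ m = N2 / u ^ m :=
      digits_inj u hu0 2 _ _ (hblt f1) (hblt f2)
        (fun i hi => congrArg Fin.val (congrFun h2 ⟨i, hi⟩))
    -- recover a
    have hmn : m ≤ n := by omega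
    have hpmn : u ^ m ≤ u ^ n := Nat.pow_le_pow_right hu0 hmn
    have ha : N1 % u ^ m = N2 % u ^ m := by
      apply digits_inj u hu0 n _ _ (lt_of_lt_of_le (hNlt f1) hpmn)
        (lt_of_lt_of_le (hNlt f2) hpmn)
      intro i hi
      exact congrArg Fin.val (congrFun h1 ⟨i, hi⟩)
    have hN : N1 = N2 := by
      rw [← Nat.div_add_mod N1 (u ^ m), ← Nat.div_add_mod N2 (u ^ m), hb, ha]
    exact eqv.injective (Fin.ext hN)
  · -- sum bound
    intro f
    set a := (eqv f : ℕ) % u ^ m with hadef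
    have hsum1 : (∑ i : Fin n, (a / u ^ (i : ℕ) % u) * 2 ^ (w * (i : ℕ)))
        = ∑ i ∈ Finset.range n, (a / u ^ i % u) * 2 ^ (w * i) :=
      Fin.sum_univ_eq_sum_range (fun i => (a / u ^ i % u) * 2 ^ (w * i)) n
    have hmn : m ≤ n := by omega
    have hsum2 : (∑ i ∈ Finset.range n, (a / u ^ i % u) * 2 ^ (w * i))
        = ∑ i ∈ Finset.range m, (a / u ^ i % u) * 2 ^ (w * i) := by
      symm
      apply Finset.sum_subset (Finset.range_subset_range.2 hmn)
      intro i _ hi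
      rw [Finset.mem_range, not_lt] at hi
      have : a < u ^ i := lt_of_lt_of_le (hNlt f) (Nat.pow_le_pow_right hu0 hi)
      rw [Nat.div_eq_of_lt this]
      simp
    have hsum3 : (∑ i ∈ Finset.range m, (a / u ^ i % u) * 2 ^ (w * i))
        ≤ ∑ i ∈ Finset.range m, (2 ^ w - 1) * (2 ^ w) ^ i := by
      apply Finset.sum_le_sum
      intro i _
      rw [pow_mul]
      apply Nat.mul_le_mul_right
      have : a / u ^ i % u < u := Nat.mod_lt _ hu0
      omega
    have hgeom := geom_sum_nat (2 ^ w) m Nat.one_le_two_pow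
    have hexp : w * m + (n / 3) * Nat.log 2 (n / 3) ≤ n * w := by
      have hmj : m + j = n := by omega
      calc w * m + (n / 3) * Nat.log 2 (n / 3) ≤ w * m + w * j := by omega
        _ = w * (m + j) := by ring
        _ = n * w := by rw [hmj]; ring
    have hfinal : 2 ^ (w * m) ≤ 2 ^ (n * w - (n / 3) * Nat.log 2 (n / 3)) :=
      Nat.pow_le_pow_right (by omega) (by omega)
    calc (∑ i : Fin n, (a / u ^ (i : ℕ) % u) * 2 ^ (w * (i : ℕ)))
        = ∑ i ∈ Finset.range m, (a / u ^ i % u) * 2 ^ (w * i) := by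
          rw [hsum1, hsum2]
      _ ≤ ∑ i ∈ Finset.range m, (2 ^ w - 1) * (2 ^ w) ^ i := hsum3
      _ < 2 ^ (w * m) := by
          rw [pow_mul]
          omega
      _ ≤ 2 ^ (n * w - (n / 3) * Nat.log 2 (n / 3)) := hfinal
end

section
/- For n ≥ 3 and u ≥ n, the number of nondecreasing sequences of length n over [0,u), namely C(u+n−1, n), is at most u^n / 2^(⌊n/3⌋·⌊log2(n/3)⌋) · 2^(O(log u)); in particular log2 C(u+n−1, n) ≤ n·log2 u − ⌊n/3⌋·⌊log2(n/3)⌋ + O(log u). -/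
/-!
Since `C(u+n-1, n) · n! = (u+n-1)(u+n-2)⋯u ≤ (2u)^n` and `n! ≥ m^(2m)` for `m = ⌊n/3⌋`
(the top `2m` factors of `n!` are all at least `m`), we get
`C(u+n-1, n) · 2^(2 m ⌊log₂ m⌋) ≤ 2^n u^n`. Half of the saved factor `2^(2 m ⌊log₂ m⌋)` pays
for the `2^n`, up to a bounded loss absorbed by `u^23`, because `n ≤ m ⌊log₂ m⌋ + 23`.
-/

namespace Nat

theorem choose_mul_factorial_le_pow (a n : ℕ) : a.choose n * n ! ≤ a ^ n := by
  rw [Nat.mul_comm, ← descFactorial_eq_factorial_mul_choose]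
  exact descFactorial_le_pow a n

theorem pow_two_mul_le_factorial {m n : ℕ} (h : 3 * m ≤ n) : m ^ (2 * m) ≤ n ! :=
  calc m ^ (2 * m) ≤ (m + 1) ^ (n - m) :=
        (Nat.pow_le_pow_left m.le_succ _).trans (Nat.pow_le_pow_right m.succ_pos (by omega))
    _ = (n + 1 - (n - m)) ^ (n - m) := by rw [show n + 1 - (n - m) = m + 1 by omega]
    _ ≤ n.descFactorial (n - m) := pow_sub_le_descFactorial n (n - m)
    _ ≤ n ! := by
      rw [← factorial_mul_descFactorial (Nat.sub_le n m)]
      exact Nat.le_mul_of_pos_left _ (factorial_pos _)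

theorem le_div_three_mul_log_add (n : ℕ) : n ≤ n / 3 * log 2 (n / 3) + 23 := by
  by_cases hm : n / 3 < 8
  · omega
  · have hlog : 3 ≤ log 2 (n / 3) := le_log_of_pow_le one_lt_two (by omega)
    have := Nat.mul_le_mul_left (n / 3) hlog
    omega

theorem choose_mul_two_pow_le {n u : ℕ} (hnu : n ≤ u) (hu : 2 ≤ u) :
    (u + n - 1).choose n * 2 ^ (n / 3 * log 2 (n / 3)) ≤ u ^ (n + 23) := by
  set m := n / 3
  set L := log 2 m
  have hfact : 2 ^ (m * L) * 2 ^ (m * L) ≤ n ! :=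
    calc 2 ^ (m * L) * 2 ^ (m * L) = (2 ^ L) ^ (2 * m) := by ring
      _ ≤ m ^ (2 * m) := by
        rcases Nat.eq_zero_or_pos m with hm | hm
        · simp [L, hm]
        · exact Nat.pow_le_pow_left (pow_log_le_self 2 hm.ne') _
      _ ≤ n ! := pow_two_mul_le_factorial (by omega)
  have hsaving : 2 ^ n ≤ 2 ^ (m * L) * u ^ 23 :=
    calc 2 ^ n ≤ 2 ^ (m * L + 23) := Nat.pow_le_pow_right two_pos (le_div_three_mul_log_add n)
      _ = 2 ^ (m * L) * 2 ^ 23 := pow_add _ _ _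
      _ ≤ 2 ^ (m * L) * u ^ 23 := Nat.mul_le_mul_left _ (Nat.pow_le_pow_left hu _)
  refine Nat.le_of_mul_le_mul_right ?_ (Nat.two_pow_pos (m * L))
  calc (u + n - 1).choose n * 2 ^ (m * L) * 2 ^ (m * L)
      ≤ (u + n - 1).choose n * n ! := by rw [Nat.mul_assoc]; exact Nat.mul_le_mul_left _ hfact
    _ ≤ (u + n - 1) ^ n := choose_mul_factorial_le_pow _ _
    _ ≤ (2 * u) ^ n := Nat.pow_le_pow_left (by omega) _
    _ = 2 ^ n * u ^ n := Nat.mul_pow _ _ _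
    _ ≤ 2 ^ (m * L) * u ^ 23 * u ^ n := Nat.mul_le_mul_right _ hsaving
    _ = u ^ (n + 23) * 2 ^ (m * L) := by ring

end Nat

/-- Counting feasibility for Lemma 1: the number of nondecreasing sequences of
length `n` over `[0,u)`, namely `C(u+n−1, n)`, satisfies
`log₂ C(u+n−1, n) ≤ n·log₂ u − ⌊n/3⌋·⌊log₂(n/3)⌋ + O(log u)`. -/
theorem stmt_3 :
    ∃ C : ℝ, 0 < C ∧ ∀ n u : ℕ, 3 ≤ n → n ≤ u →
      Real.logb 2 ((u + n - 1).choose n) ≤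
        n * Real.logb 2 u - ((n / 3) * Nat.log 2 (n / 3) : ℕ) + C * Real.logb 2 u := by
  refine ⟨23, by norm_num, fun n u hn hnu => ?_⟩
  have hchoose : 0 < (u + n - 1).choose n := Nat.choose_pos (by omega)
  have hbound := Real.logb_le_logb_of_le one_lt_two
    (Nat.cast_pos.mpr (Nat.mul_pos hchoose (Nat.two_pow_pos _)))
    (Nat.cast_le (α := ℝ).mpr (Nat.choose_mul_two_pow_le hnu (by omega)))
  rw [Nat.cast_mul, Real.logb_mul (Nat.cast_pos.mpr hchoose).ne' (by positivity),
    Nat.cast_pow, Nat.cast_pow, Real.logb_pow, Real.logb_pow, Nat.cast_ofNat, Real.logb_self_eq_one one_lt_two] at hbound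
  push_cast at hbound ⊢
  linarith
end

section
/- Cycle-leader counting sort correctness: let S be an array of n elements with keys in [1,m], let c_i = 1 + Σ_{j<i} (number of elements with key j) be the starting position of key i's bucket, and c_{m+1} = n+1. Define a process that repeatedly, at position j, checks whether the key i of S[j] satisfies c_i ≤ j < c_{i+1}; if so advances j, otherwise swaps S[j] with S[c_i + d_i] and increments d_i (where d_i counts elements already placed in bucket i). Then the process terminates after at most 2n operations (each element is either skipped once or swapped into its final bucket region and never leaves it), and upon termination S is sorted by key. -/
/-!
The bucket boundaries are fixed by the initial array, and swaps never change how many copies of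
each key the array holds. When the key `i` at position `j` is outside its bucket, that bucket has
a free slot `c i + d i` beyond its filled prefix, and the whole bucket lies after `j`: otherwise
the bucket would be full of `i`'s, or would lie in the scanned prefix, where every position already
holds a key of its own bucket, and with position `j` there would be too many copies of `i`. So a
swap disturbs neither the filled prefixes nor the scanned prefix, and the potential `j + ∑ d i`
rises by one per step while staying at most `2n + 1`. At `j = n + 1` every position holds a key of
its own bucket, and buckets are ordered like their keys.
-/

namespace Stmt17

/-- Swap the contents of positions `p` and `q` of the array `a`. -/
def swapFn (a : ℕ → ℕ) (p q : ℕ) : ℕ → ℕ :=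
  fun r => if r = p then a q else if r = q then a p else a r

/-- One step of the cycle-leader counting-sort process on state
`(j, d, a)` (current position, bucket fill counts, array of keys), with
bucket boundaries `c` and array positions `1,…,n`:
* if the key `i = a j` satisfies `c i ≤ j < c (i+1)`, the element is already
  in its bucket region and we advance `j`;
* otherwise we swap `a j` with `a (c i + d i)` and increment `d i`. -/
inductive Step (n : ℕ) (c : ℕ → ℕ) :
    (ℕ × (ℕ → ℕ) × (ℕ → ℕ)) → (ℕ × (ℕ → ℕ) × (ℕ → ℕ)) → Prop
  | advance (j : ℕ) (d a : ℕ → ℕ) (h1 : j ≤ n)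
      (h2 : c (a j) ≤ j) (h3 : j < c (a j + 1)) :
      Step n c (j, d, a) (j + 1, d, a)
  | place (j : ℕ) (d a : ℕ → ℕ) (h1 : j ≤ n)
      (h2 : ¬ (c (a j) ≤ j ∧ j < c (a j + 1))) :
      Step n c (j, d, a)
        (j, Function.update d (a j) (d (a j) + 1), swapFn a j (c (a j) + d (a j)))

open Finset

def keyCount (n : ℕ) (a : ℕ → ℕ) (i : ℕ) : ℕ := #{p ∈ Icc 1 n | a p = i}

/-- The bucket of key `i` is `[bucketStart n a i, bucketStart n a (i + 1))`. -/
def bucketStart (n : ℕ) (a : ℕ → ℕ) (i : ℕ) : ℕ := 1 + #{p ∈ Icc 1 n | a p < i}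

section BucketStart

variable {n : ℕ} {a : ℕ → ℕ}

theorem bucketStart_mono : Monotone (bucketStart n a) := fun i i' h => by
  unfold bucketStart
  gcongr

theorem one_le_bucketStart (i : ℕ) : 1 ≤ bucketStart n a i :=
  Nat.le_add_right 1 _

theorem bucketStart_le (i : ℕ) : bucketStart n a i ≤ n + 1 := by
  have := card_filter_le (Icc 1 n) (fun p => a p < i)
  simp only [Nat.card_Icc] at this
  simp only [bucketStart]
  omega

theorem bucketStart_succ (i : ℕ) :
    bucketStart n a (i + 1) = bucketStart n a i + keyCount n a i := by
  have hsplit : {p ∈ Icc 1 n | a p < i + 1} =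
      {p ∈ Icc 1 n | a p < i} ∪ {p ∈ Icc 1 n | a p = i} := by
    ext p
    simp only [mem_union, mem_filter, Nat.lt_succ_iff_lt_or_eq, and_or_left]
  have hdisj : Disjoint {p ∈ Icc 1 n | a p < i} {p ∈ Icc 1 n | a p = i} :=
    disjoint_filter.mpr fun _ _ h => h.ne
  simp only [bucketStart, keyCount, hsplit, card_union_of_disjoint hdisj]
  ring

end BucketStart

theorem le_of_mem_bucket {c : ℕ → ℕ} (hc : Monotone c) {k l p q : ℕ}
    (hp : c k ≤ p) (hq : q < c (l + 1)) (hpq : p ≤ q) : k ≤ l := by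
  by_contra! h
  have : c (l + 1) ≤ c k := hc h
  omega

theorem swapFn_eq_comp_swap (a : ℕ → ℕ) (p q : ℕ) : swapFn a p q = a ∘ Equiv.swap p q := by
  funext r
  simp only [swapFn, Function.comp_apply, Equiv.swap_apply_def]
  split_ifs <;> rfl

theorem swapFn_apply_right (a : ℕ → ℕ) (p q : ℕ) : swapFn a p q q = a p := by
  rw [swapFn_eq_comp_swap, Function.comp_apply, Equiv.swap_apply_right]

theorem swapFn_apply_of_ne (a : ℕ → ℕ) {p q r : ℕ} (hp : r ≠ p) (hq : r ≠ q) :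
    swapFn a p q r = a r := by
  rw [swapFn_eq_comp_swap, Function.comp_apply, Equiv.swap_apply_of_ne_of_ne hp hq]

theorem keyCount_swapFn {n : ℕ} (a : ℕ → ℕ) {p q : ℕ} (hp : p ∈ Icc 1 n) (hq : q ∈ Icc 1 n) :
    keyCount n (swapFn a p q) = keyCount n a := by
  funext i
  refine card_equiv (Equiv.swap p q) fun r => ?_
  simp only [mem_filter, swapFn_eq_comp_swap, Function.comp_apply]
  by_cases hrp : r = p
  · subst hrp; simp [hp, hq]
  by_cases hrq : r = q
  · subst hrq; simp [hp, hq]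
  simp [Equiv.swap_apply_of_ne_of_ne hrp hrq]

theorem sum_keyCount_image (n : ℕ) (a : ℕ → ℕ) :
    ∑ i ∈ (Icc 1 n).image a, keyCount n a i = n := by
  simpa only [keyCount, Nat.card_Icc, Nat.add_sub_cancel] using
    (card_eq_sum_card_image a (Icc 1 n)).symm

/-- The bucket of `a j` has exactly as many slots as there are copies of `a j`, and one copy sits
outside it. -/
theorem exists_ne_of_not_mem_bucket {n : ℕ} {a₀ a : ℕ → ℕ}
    (hcount : keyCount n a = keyCount n a₀) {j : ℕ} (hj : j ∈ Icc 1 n)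
    (hout : ¬ (bucketStart n a₀ (a j) ≤ j ∧ j < bucketStart n a₀ (a j + 1))) :
    ∃ p, bucketStart n a₀ (a j) ≤ p ∧ p < bucketStart n a₀ (a j + 1) ∧ a p ≠ a j := by
  by_contra! hfull
  have hsub : insert j (Ico (bucketStart n a₀ (a j)) (bucketStart n a₀ (a j + 1))) ⊆
      {p ∈ Icc 1 n | a p = a j} := by
    intro p hp
    rcases mem_insert.mp hp with rfl | hp
    · exact mem_filter.mpr ⟨hj, rfl⟩
    · obtain ⟨hp₁, hp₂⟩ := mem_Ico.mp hp
      have := one_le_bucketStart (n := n) (a := a₀) (a j)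
      have := bucketStart_le (n := n) (a := a₀) (a j + 1)
      exact mem_filter.mpr ⟨mem_Icc.mpr ⟨by omega, by omega⟩, hfull p hp₁ hp₂⟩
  have hj' : j ∉ Ico (bucketStart n a₀ (a j)) (bucketStart n a₀ (a j + 1)) := by
    rw [mem_Ico]
    exact hout
  have hcard := card_le_card hsub
  rw [card_insert_of_notMem hj', Nat.card_Ico, bucketStart_succ, Nat.add_sub_cancel_left] at hcard
  change _ ≤ keyCount n a (a j) at hcard
  rw [hcount] at hcard
  omega

structure Invariant (n : ℕ) (a₀ : ℕ → ℕ) (j : ℕ) (d a : ℕ → ℕ) : Prop where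
  one_le_pos : 1 ≤ j
  pos_le : j ≤ n + 1
  keyCount_eq : keyCount n a = keyCount n a₀
  filled : ∀ i p, bucketStart n a₀ i ≤ p → p < bucketStart n a₀ i + d i → a p = i
  scanned : ∀ p, 1 ≤ p → p < j → bucketStart n a₀ (a p) ≤ p ∧ p < bucketStart n a₀ (a p + 1)
  fill_le : ∀ i, bucketStart n a₀ i + d i ≤ bucketStart n a₀ (i + 1)

def potential (n : ℕ) (a₀ : ℕ → ℕ) (j : ℕ) (d : ℕ → ℕ) : ℕ := j + ∑ i ∈ (Icc 1 n).image a₀, d i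

namespace Invariant

variable {n : ℕ} {a₀ : ℕ → ℕ}

theorem init : Invariant n a₀ 1 (fun _ => 0) a₀ where
  one_le_pos := le_rfl
  pos_le := by simp
  keyCount_eq := rfl
  filled _ _ h h' := by omega
  scanned _ h h' := by omega
  fill_le i := by simpa using bucketStart_mono (Nat.le_succ i)

theorem place_target {j : ℕ} {d a : ℕ → ℕ} (h : Invariant n a₀ j d a) (hj : j ≤ n)
    (hout : ¬ (bucketStart n a₀ (a j) ≤ j ∧ j < bucketStart n a₀ (a j + 1))) :
    j < bucketStart n a₀ (a j) ∧
      bucketStart n a₀ (a j) + d (a j) < bucketStart n a₀ (a j + 1) := by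
  obtain ⟨p, hp₁, hp₂, hp⟩ :=
    exists_ne_of_not_mem_bucket h.keyCount_eq (mem_Icc.mpr ⟨h.one_le_pos, hj⟩) hout
  constructor
  · by_contra! hj'
    obtain ⟨hq₁, hq₂⟩ := h.scanned p (le_trans (one_le_bucketStart _) hp₁) (by omega)
    have h₁ := le_of_mem_bucket bucketStart_mono hq₁ hp₂ le_rfl
    have h₂ := le_of_mem_bucket bucketStart_mono hp₁ hq₂ le_rfl
    exact hp (le_antisymm h₁ h₂)
  · by_contra! hfull
    exact hp (h.filled _ p hp₁ (by omega))

section Place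

variable {j : ℕ} {d a : ℕ → ℕ} (h : Invariant n a₀ j d a) (hj : j ≤ n)
  (hout : ¬ (bucketStart n a₀ (a j) ≤ j ∧ j < bucketStart n a₀ (a j + 1)))
include h hj hout

theorem place_filled (k p : ℕ) (hp : bucketStart n a₀ k ≤ p)
    (hp' : p < bucketStart n a₀ k + Function.update d (a j) (d (a j) + 1) k) :
    swapFn a j (bucketStart n a₀ (a j) + d (a j)) p = k := by
  obtain ⟨hjc, ht⟩ := h.place_target hj hout
  by_cases hk : k = a j
  · subst hk
    rw [Function.update_self] at hp'
    rcases eq_or_ne p (bucketStart n a₀ (a j) + d (a j)) with rfl | hpt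
    · exact swapFn_apply_right a _ _
    · rw [swapFn_apply_of_ne a (by omega) hpt]
      exact h.filled _ p hp (by omega)
  · rw [Function.update_of_ne hk] at hp'
    have hpk := h.filled k p hp hp'
    have hpj : p ≠ j := by
      rintro rfl
      exact hk hpk.symm
    have hpt : p ≠ bucketStart n a₀ (a j) + d (a j) := by
      rintro rfl
      have hki := le_of_mem_bucket bucketStart_mono hp ht le_rfl
      have hik := le_of_mem_bucket bucketStart_mono (Nat.le_add_right _ (d (a j)))
        (lt_of_lt_of_le hp' (h.fill_le k)) le_rfl
      exact hk (le_antisymm hki hik)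
    rw [swapFn_apply_of_ne a hpj hpt]
    exact hpk

theorem place : Invariant n a₀ j (Function.update d (a j) (d (a j) + 1))
    (swapFn a j (bucketStart n a₀ (a j) + d (a j))) := by
  obtain ⟨hjc, ht⟩ := h.place_target hj hout
  have hj₁ := h.one_le_pos
  have ht₁ := bucketStart_le (n := n) (a := a₀) (a j + 1)
  refine ⟨hj₁, h.pos_le, ?_, h.place_filled hj hout, fun p hp hp' => ?_, fun k => ?_⟩
  · rw [← h.keyCount_eq]
    exact keyCount_swapFn a (mem_Icc.mpr ⟨hj₁, hj⟩) (mem_Icc.mpr ⟨by omega, by omega⟩)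
  · rw [swapFn_apply_of_ne a (by omega) (by omega)]
    exact h.scanned p hp hp'
  · rcases eq_or_ne k (a j) with rfl | hk
    · rw [Function.update_self]
      omega
    · rw [Function.update_of_ne hk]
      exact h.fill_le k

end Place

theorem step {j j' : ℕ} {d d' a a' : ℕ → ℕ} (h : Invariant n a₀ j d a)
    (hs : Step n (bucketStart n a₀) (j, d, a) (j', d', a')) : Invariant n a₀ j' d' a' := by
  cases hs with
  | advance _ _ _ hj h₁ h₂ =>
    refine ⟨by omega, by omega, h.keyCount_eq, h.filled, fun p hp hp' => ?_, h.fill_le⟩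
    rcases Nat.lt_succ_iff_lt_or_eq.mp hp' with hp' | rfl
    · exact h.scanned p hp hp'
    · exact ⟨h₁, h₂⟩
  | place _ _ _ hj hout => exact h.place hj hout

theorem potential_step {j j' : ℕ} {d d' a a' : ℕ → ℕ} (h : Invariant n a₀ j d a)
    (hs : Step n (bucketStart n a₀) (j, d, a) (j', d', a')) :
    potential n a₀ j' d' = potential n a₀ j d + 1 := by
  cases hs with
  | advance _ _ _ _ _ _ =>
    simp only [potential]
    ring
  | place _ _ _ hj _ =>
    have hmem : a j ∈ (Icc 1 n).image a₀ := by
      have hpos : 0 < keyCount n a₀ (a j) := by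
        rw [← h.keyCount_eq]
        exact card_pos.mpr ⟨j, mem_filter.mpr ⟨mem_Icc.mpr ⟨h.one_le_pos, hj⟩, rfl⟩⟩
      obtain ⟨p, hp⟩ := card_pos.mp hpos
      exact mem_image.mpr ⟨p, (mem_filter.mp hp).1, (mem_filter.mp hp).2⟩
    simp only [potential, sum_update_of_mem hmem, sum_eq_add_sum_sdiff_singleton_of_mem hmem d]
    ring

theorem potential_le {j : ℕ} {d a : ℕ → ℕ} (h : Invariant n a₀ j d a) :
    potential n a₀ j d ≤ 2 * n + 1 := by
  have hd : ∑ i ∈ (Icc 1 n).image a₀, d i ≤ ∑ i ∈ (Icc 1 n).image a₀, keyCount n a₀ i :=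
    sum_le_sum fun i _ => by
      have := h.fill_le i
      rw [bucketStart_succ] at this
      omega
  rw [sum_keyCount_image] at hd
  have := h.pos_le
  simp only [potential]
  omega

theorem sorted {d a : ℕ → ℕ} (h : Invariant n a₀ (n + 1) d a) :
    ∀ p q, 1 ≤ p → p ≤ q → q ≤ n → a p ≤ a q := fun p q hp hpq hq =>
  le_of_mem_bucket bucketStart_mono (h.scanned p hp (by omega)).1
    (h.scanned q (by omega) (by omega)).2 hpq

end Invariant

theorem invariant_of_trace {n : ℕ} {a₀ : ℕ → ℕ} {T : ℕ} {tr : ℕ → ℕ × (ℕ → ℕ) × (ℕ → ℕ)}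
    (h0 : tr 0 = (1, fun _ => 0, a₀))
    (hstep : ∀ t < T, Step n (bucketStart n a₀) (tr t) (tr (t + 1))) :
    ∀ t ≤ T, Invariant n a₀ (tr t).1 (tr t).2.1 (tr t).2.2 ∧
      potential n a₀ (tr t).1 (tr t).2.1 = t + 1
  | 0, _ => by
    rw [h0]
    exact ⟨Invariant.init, by simp [potential]⟩
  | t + 1, ht => by
    obtain ⟨h, hpot⟩ := invariant_of_trace h0 hstep t (by omega)
    exact ⟨h.step (hstep t ht), by rw [h.potential_step (hstep t ht), hpot]⟩

theorem stmt_17_general (n : ℕ) (a₀ : ℕ → ℕ)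
    (c : ℕ → ℕ)
    (hc : ∀ i, c i = 1 + ((Finset.Icc 1 n).filter (fun p => a₀ p < i)).card)
    (T : ℕ) (tr : ℕ → ℕ × (ℕ → ℕ) × (ℕ → ℕ))
    (h0 : tr 0 = (1, fun _ => 0, a₀))
    (hstep : ∀ t < T, Step n c (tr t) (tr (t + 1))) :
    T ≤ 2 * n ∧
    ((tr T).1 = n + 1 →
      ∀ p q, 1 ≤ p → p ≤ q → q ≤ n → (tr T).2.2 p ≤ (tr T).2.2 q) := by
  obtain rfl : c = bucketStart n a₀ := funext hc
  obtain ⟨h, hpot⟩ := invariant_of_trace h0 hstep T le_rfl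
  refine ⟨?_, fun hend => ?_⟩
  · have := h.potential_le
    omega
  · rw [hend] at h
    exact h.sorted

/-- Cycle-leader counting sort: with keys in `[1,m]`,
`c i = 1 + #{p ∈ [1,n] : a₀ p < i}` (so `c (m+1) = n+1`), and fill counts `d`
initially `0`, any execution of the process starting at position `j = 1` takes
at most `2n` steps, and when it terminates (i.e. `j = n + 1`) the array is
sorted by key on positions `1,…,n`. -/
theorem stmt_17 (n m : ℕ) (a₀ : ℕ → ℕ)
    (hkeys : ∀ p, 1 ≤ p → p ≤ n → 1 ≤ a₀ p ∧ a₀ p ≤ m)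
    (c : ℕ → ℕ)
    (hc : ∀ i, c i = 1 + ((Finset.Icc 1 n).filter (fun p => a₀ p < i)).card)
    (T : ℕ) (tr : ℕ → ℕ × (ℕ → ℕ) × (ℕ → ℕ))
    (h0 : tr 0 = (1, fun _ => 0, a₀))
    (hstep : ∀ t < T, Step n c (tr t) (tr (t + 1))) :
    T ≤ 2 * n ∧
    ((tr T).1 = n + 1 →
      ∀ p q, 1 ≤ p → p ≤ q → q ≤ n → (tr T).2.2 p ≤ (tr T).2.2 q) :=
  stmt_17_general n a₀ c hc T tr h0 hstep

end Stmt17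
end
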